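/- arXiv:1410.1700 — 2 statements merged into one kernel-verified Lean document; each statement's English description precedes it below -/
import Mathlib

section
/- For every t ∈ ℝ, the matrix exponential of t·Y_a, where Y_a = [[0,0,0],[0,0,−1],[0,−1,0]], equals [[1,0,0],[0,cosh t, −sinh t],[0,−sinh t, cosh t]]. -/
open Matrix

/-- The element `Y_a` of `so(2,1)`. -/
def Ya : Matrix (Fin 3) (Fin 3) ℝ := !![0,0,0; 0,0,-1; 0,-1,0]

/-!
Since `Y_a ^ 3 = Y_a`, the odd powers of `Y_a` all equal `Y_a` and its nonzero even powers all
equal `Y_a ^ 2`, so the exponential series of `t • Y_a` splits into the series of `sinh t` and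
`cosh t`: `exp (t • Y_a) = 1 + sinh t • Y_a + (cosh t - 1) • Y_a ^ 2`.
-/

open NormedSpace Nat

section PowThreeEqSelf

variable {𝔸 : Type*} [Ring 𝔸] {a : 𝔸}

theorem pow_two_mul_add_one_of_pow_three_eq_self (ha : a ^ 3 = a) (n : ℕ) :
    a ^ (2 * n + 1) = a := by
  induction n with
  | zero => simp
  | succ n ih =>
    rw [show 2 * (n + 1) + 1 = 2 * n + 1 + 2 by ring, pow_add, ih, ← pow_succ' a 2, ha]

theorem pow_two_mul_succ_of_pow_three_eq_self (ha : a ^ 3 = a) (n : ℕ) :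
    a ^ (2 * (n + 1)) = a ^ 2 := by
  rw [show 2 * (n + 1) = 2 * n + 1 + 1 by ring, pow_succ,
    pow_two_mul_add_one_of_pow_three_eq_self ha, sq]

variable [Algebra ℝ 𝔸] [TopologicalSpace 𝔸] [IsTopologicalRing 𝔸] [ContinuousSMul ℝ 𝔸]

theorem hasSum_expSeries_smul_of_pow_three_eq_self (ha : a ^ 3 = a) (t : ℝ) :
    HasSum (fun n ↦ (n ! : ℝ)⁻¹ • (t • a) ^ n)
      (1 + Real.sinh t • a + (Real.cosh t - 1) • a ^ 2) := by
  have heven : HasSum (fun n ↦ ((2 * n)! : ℝ)⁻¹ • (t • a) ^ (2 * n))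
      (Real.cosh t • a ^ 2 + (1 - a ^ 2)) := by
    -- the series of `cosh t • a ^ 2`, corrected at `n = 0` where `a ^ 0 = 1` instead of `a ^ 2`
    have hcosh := (Real.hasSum_cosh t).smul_const (a ^ 2)
    refine HasSum.congr_fun (hcosh.add (hasSum_ite_eq 0 (1 - a ^ 2))) fun n ↦ ?_
    rcases n with _ | n
    · simp
    · simp [smul_pow, pow_two_mul_succ_of_pow_three_eq_self ha, smul_smul, div_eq_inv_mul]
  have hodd : HasSum (fun n ↦ ((2 * n + 1)! : ℝ)⁻¹ • (t • a) ^ (2 * n + 1))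
      (Real.sinh t • a) := by
    refine HasSum.congr_fun ((Real.hasSum_sinh t).smul_const a) fun n ↦ ?_
    simp [smul_pow, pow_two_mul_add_one_of_pow_three_eq_self ha, smul_smul, div_eq_inv_mul]
  convert HasSum.even_add_odd (f := fun n ↦ (n ! : ℝ)⁻¹ • (t • a) ^ n) heven hodd using 1
  rw [sub_smul, one_smul]
  abel

variable [T2Space 𝔸]

theorem exp_smul_of_pow_three_eq_self (ha : a ^ 3 = a) (t : ℝ) :
    exp (t • a) = 1 + Real.sinh t • a + (Real.cosh t - 1) • a ^ 2 := by
  rw [exp_eq_tsum ℝ]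
  exact (hasSum_expSeries_smul_of_pow_three_eq_self ha t).tsum_eq

end PowThreeEqSelf

theorem Ya_sq : Ya ^ 2 = !![0, 0, 0; 0, 1, 0; 0, 0, 1] := by
  ext i j
  fin_cases i <;> fin_cases j <;> simp [Ya, sq, Matrix.mul_apply, Fin.sum_univ_succ]

theorem Ya_pow_three : Ya ^ 3 = Ya := by
  ext i j
  fin_cases i <;> fin_cases j <;> simp [Ya, pow_succ, Matrix.mul_apply, Fin.sum_univ_succ]

/-- `exp(t Y_a) = [[1,0,0],[0,cosh t,−sinh t],[0,−sinh t,cosh t]]`. -/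
theorem exp_tYa (t : ℝ) :
    NormedSpace.exp (t • Ya) =
      !![1, 0, 0;
         0, Real.cosh t, -Real.sinh t;
         0, -Real.sinh t, Real.cosh t] := by
  rw [exp_smul_of_pow_three_eq_self Ya_pow_three, Ya_sq]
  ext i j
  fin_cases i <;> fin_cases j <;> simp [Ya]
end

section
/- Let g(t,s) be the isometry of ℝ³ given by g(t,s)(p) = a(t)p + (λt, s, −s)ᵀ, where a(t) = [[1,0,0],[0,cosh t,−sinh t],[0,−sinh t,cosh t]] and λ > 0 is fixed. Then in the null coordinates p = x e₁ + y(e₂−e₃) + z(e₂+e₃), one has g(t,s)(p) = (x+λt)e₁ + (s + e^t y)(e₂−e₃) + e^{−t} z (e₂+e₃). Consequently, every point of ℝ³ lies in the orbit of some point z(e₂+e₃) with z ∈ ℝ, and g(t,s)(z(e₂+e₃)) ∈ ℝ(e₂+e₃) implies (t,s) = (0,0) when applied at a point with z arbitrary; thus the line ℝ(e₂+e₃) meets every orbit of the group {g(t,s)} exactly once. -/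
/-!
In the null frame `e₁, e₂ - e₃, e₂ + e₃` the matrix `a(t)` is diagonal with eigenvalues
`1, eᵗ, e⁻ᵗ` (since `cosh t ± sinh t = e^{±t}`), and the translation part `(λt, s, -s)` is
`λt e₁ + s (e₂ - e₃)`. So `g(t,s)` shifts the `e₁`-coordinate by `λt`, acts on the
`(e₂ - e₃)`-coordinate by `y ↦ s + eᵗ y` and on the `(e₂ + e₃)`-coordinate by `z ↦ e⁻ᵗ z`.
Starting from `z (e₂ + e₃)` the first two coordinates of the image are `λt` and `s`, which can be
prescribed freely and vanish only for `(t, s) = (0, 0)`.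
-/

open Matrix

/-- The matrix `a(t)`. -/
noncomputable def aMat (t : ℝ) : Matrix (Fin 3) (Fin 3) ℝ :=
  !![1, 0, 0;
     0, Real.cosh t, -Real.sinh t;
     0, -Real.sinh t, Real.cosh t]

/-- The isometry `g(t,s)(p) = a(t)p + (λt, s, −s)ᵀ` of `A_λ ⋉ ℓ`. -/
noncomputable def gIso (lam t s : ℝ) (p : Fin 3 → ℝ) : Fin 3 → ℝ :=
  aMat t *ᵥ p + ![lam * t, s, -s]

lemma aMat_mulVec_e₁ (t : ℝ) : aMat t *ᵥ ![1, 0, 0] = ![1, 0, 0] := by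
  ext i; fin_cases i <;> simp [aMat, mulVec, dotProduct, Fin.sum_univ_three]

lemma aMat_mulVec_e₂_sub_e₃ (t : ℝ) :
    aMat t *ᵥ ![0, 1, -1] = Real.exp t • ![0, 1, -1] := by
  ext i; fin_cases i <;>
    simp [aMat, mulVec, dotProduct, Fin.sum_univ_three, ← Real.cosh_add_sinh]

lemma aMat_mulVec_e₂_add_e₃ (t : ℝ) :
    aMat t *ᵥ ![0, 1, 1] = Real.exp (-t) • ![0, 1, 1] := by
  ext i; fin_cases i <;>
    simp [aMat, mulVec, dotProduct, Fin.sum_univ_three, ← Real.cosh_sub_sinh] <;> ring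

lemma translation_nullCoords (a s : ℝ) :
    ![a, s, -s] = a • ![(1 : ℝ), 0, 0] + s • ![(0 : ℝ), 1, -1] := by
  ext i; fin_cases i <;> simp

lemma eq_nullCoords (p : Fin 3 → ℝ) :
    p = p 0 • ![(1 : ℝ), 0, 0] + ((p 1 - p 2) / 2) • ![(0 : ℝ), 1, -1]
      + ((p 1 + p 2) / 2) • ![(0 : ℝ), 1, 1] := by
  ext i; fin_cases i <;> simp <;> ring

lemma gIso_nullCoords (lam t s x y z : ℝ) :
    gIso lam t s (x • ![(1:ℝ),0,0] + y • ![(0:ℝ),1,-1] + z • ![(0:ℝ),1,1]) =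
      (x + lam * t) • ![(1:ℝ),0,0] + (s + Real.exp t * y) • ![(0:ℝ),1,-1]
        + (Real.exp (-t) * z) • ![(0:ℝ),1,1] := by
  rw [gIso, translation_nullCoords (lam * t) s]
  simp only [mulVec_add, mulVec_smul, aMat_mulVec_e₁, aMat_mulVec_e₂_sub_e₃,
    aMat_mulVec_e₂_add_e₃, smul_smul]
  module

lemma gIso_smul_e₂_add_e₃ (lam t s z : ℝ) :
    gIso lam t s (z • ![(0:ℝ),1,1]) =
      (lam * t) • ![(1:ℝ),0,0] + s • ![(0:ℝ),1,-1] + (Real.exp (-t) * z) • ![(0:ℝ),1,1] := by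
  simpa using gIso_nullCoords lam t s 0 0 z

/-- in null coordinates `p = x e₁ + y(e₂−e₃) + z(e₂+e₃)` one has
`g(t,s)(p) = (x+λt)e₁ + (s + eᵗy)(e₂−e₃) + e⁻ᵗz(e₂+e₃)`; every point lies in the
orbit of some `z(e₂+e₃)`; and `g(t,s)(z(e₂+e₃)) ∈ ℝ(e₂+e₃)` forces `(t,s) = (0,0)`.
Thus `ℝ(e₂+e₃)` meets every orbit of `{g(t,s)}` exactly once. -/
theorem Alambda_orbits (lam : ℝ) (hlam : 0 < lam) :
    (∀ t s x y z : ℝ,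
      gIso lam t s (x • ![(1:ℝ),0,0] + y • ![(0:ℝ),1,-1] + z • ![(0:ℝ),1,1]) =
        (x + lam * t) • ![(1:ℝ),0,0] + (s + Real.exp t * y) • ![(0:ℝ),1,-1]
          + (Real.exp (-t) * z) • ![(0:ℝ),1,1]) ∧
    (∀ p : Fin 3 → ℝ, ∃ t s z : ℝ, p = gIso lam t s (z • ![(0:ℝ),1,1])) ∧
    (∀ t s z : ℝ,
      (∃ c : ℝ, gIso lam t s (z • ![(0:ℝ),1,1]) = c • ![(0:ℝ),1,1]) →
        t = 0 ∧ s = 0) := by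
  refine ⟨gIso_nullCoords lam, fun p => ?_, fun t s z ⟨c, hc⟩ => ?_⟩
  · refine ⟨p 0 / lam, (p 1 - p 2) / 2, Real.exp (p 0 / lam) * ((p 1 + p 2) / 2), ?_⟩
    rw [gIso_smul_e₂_add_e₃, mul_div_cancel₀ _ hlam.ne', ← mul_assoc, ← Real.exp_add,
      neg_add_cancel, Real.exp_zero, one_mul]
    exact eq_nullCoords p
  · rw [gIso_smul_e₂_add_e₃] at hc
    have h₀ := congrFun hc 0
    have h₁ := congrFun hc 1
    have h₂ := congrFun hc 2
    simp only [Pi.add_apply, Pi.smul_apply, smul_eq_mul, Matrix.cons_val] at h₀ h₁ h₂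
    have ht : t = 0 := by simpa [hlam.ne'] using h₀
    exact ⟨ht, by linarith⟩
end
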